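/- arXiv:1801.01455 — 3 statements merged into one kernel-verified Lean document; each statement's English description precedes it below -/
import Mathlib

section
/- Let P be a positive integer, δ > 0, ε ≥ 0, μ₀ > 0, and set κ = ε√P/δ. Suppose d ∈ ℝ^P satisfies ‖d‖₂ ≥ δ and the coherence bound μ(d) = P‖d‖_∞²/‖d‖₂² ≤ μ₀, and suppose κ < 1. Then the number N of coordinates j with |d[j]| > ε satisfies N ≥ P(1 − κ²)/μ₀. -/
/-!
Split `‖d‖₂² = ∑ d_j²` into the `N` large coordinates, each at most `‖d‖_∞²`, and the small
ones, each at most `ε²`: `‖d‖₂² ≤ N ‖d‖_∞² + P ε²`. The coherence bound turns `‖d‖_∞²` into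
`μ₀ ‖d‖₂² / P`, so `N μ₀ / P ≥ 1 - P ε² / ‖d‖₂² ≥ 1 - κ²` because `‖d‖₂ ≥ δ`.
-/

open Finset

section
variable {ι : Type*} [Fintype ι]

theorem sq_le_pi_norm_sq (d : ι → ℝ) (j : ι) : d j ^ 2 ≤ ‖d‖ ^ 2 := by
  rw [← sq_abs, ← Real.norm_eq_abs]
  exact pow_le_pow_left₀ (norm_nonneg _) (norm_le_pi_norm d j) 2

theorem sum_sq_le_card_filter_mul_pi_norm_sq_add (d : ι → ℝ) (ε : ℝ) :
    ∑ j, d j ^ 2 ≤ #{j | ε < |d j|} * ‖d‖ ^ 2 + Fintype.card ι * ε ^ 2 := by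
  rw [← sum_filter_add_sum_filter_not univ fun j => ε < |d j|]
  gcongr ?_ + ?_
  · simpa using sum_le_card_nsmul _ _ _ fun j _ => sq_le_pi_norm_sq d j
  · calc ∑ j with ¬ε < |d j|, d j ^ 2
        ≤ #{j | ¬ε < |d j|} * ε ^ 2 := by
          refine (sum_le_card_nsmul _ _ _ fun j hj => ?_).trans_eq (nsmul_eq_mul _ _)
          rw [mem_filter, not_lt] at hj
          exact sq_le_sq' (neg_le_of_abs_le hj.2) (le_of_abs_le hj.2)
      _ ≤ Fintype.card ι * ε ^ 2 := by
          gcongr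
          exact card_le_univ _

theorem card_mul_one_sub_le_card_filter_mul (d : ι → ℝ) {ε μ₀ : ℝ}
    (hd : 0 < ∑ j, d j ^ 2) (hcoh : Fintype.card ι * ‖d‖ ^ 2 ≤ μ₀ * ∑ j, d j ^ 2) :
    Fintype.card ι * (1 - Fintype.card ι * ε ^ 2 / ∑ j, d j ^ 2) ≤ #{j | ε < |d j|} * μ₀ := by
  set S := ∑ j, d j ^ 2
  set P : ℝ := (Fintype.card ι : ℝ)
  set N : ℝ := (#{j | ε < |d j|} : ℝ)
  have hsplit : S ≤ N * ‖d‖ ^ 2 + P * ε ^ 2 := sum_sq_le_card_filter_mul_pi_norm_sq_add d ε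
  rw [mul_one_sub, mul_div_assoc', sub_le_iff_le_add, ← sub_le_iff_le_add', le_div_iff₀ hd]
  have hN : 0 ≤ N := Nat.cast_nonneg _
  have hP : 0 ≤ P := Nat.cast_nonneg _
  linarith [mul_le_mul_of_nonneg_left hcoh hN, mul_le_mul_of_nonneg_left hsplit hP]

end

theorem distinguishing_coordinates_count_general (P : ℕ)
    (δ ε μ₀ : ℝ) (hδ : 0 < δ) (hμ₀ : 0 < μ₀)
    (d : Fin P → ℝ)
    (hd₂ : Real.sqrt (∑ j, d j ^ 2) ≥ δ)
    (hcoh : (P : ℝ) * ‖d‖ ^ 2 / (∑ j, d j ^ 2) ≤ μ₀) :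
    ((Finset.univ.filter fun j => ε < |d j|).card : ℝ) ≥
      (P : ℝ) * (1 - (ε * Real.sqrt P / δ) ^ 2) / μ₀ := by
  have hδS : δ ^ 2 ≤ ∑ j, d j ^ 2 := Real.le_sqrt' hδ |>.mp hd₂
  have hS : 0 < ∑ j, d j ^ 2 := (pow_pos hδ 2).trans_le hδS
  have hcount := card_mul_one_sub_le_card_filter_mul d (ε := ε) hS
    (by rw [Fintype.card_fin]; exact (div_le_iff₀ hS).mp hcoh)
  have hκ : (ε * Real.sqrt P / δ) ^ 2 = P * ε ^ 2 / δ ^ 2 := by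
    rw [div_pow, mul_pow, Real.sq_sqrt P.cast_nonneg, mul_comm]
  rw [ge_iff_le, div_le_iff₀ hμ₀, hκ]
  simp only [Fintype.card_fin] at hcount
  refine le_trans ?_ hcount
  gcongr

/-- **Number of distinguishing coordinates.**
Let `κ = ε√P/δ < 1` and `μ₀ > 0`.  If `d ∈ ℝ^P` satisfies `‖d‖₂ ≥ δ` and the coherence
bound `μ(d) = P‖d‖_∞² / ‖d‖₂² ≤ μ₀`, then the number `N` of coordinates `j` with
`|d j| > ε` satisfies `N ≥ P(1 − κ²)/μ₀`.  (The norm on `Fin P → ℝ` is the sup norm.) -/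
theorem distinguishing_coordinates_count (P : ℕ) (hP : 0 < P)
    (δ ε μ₀ : ℝ) (hδ : 0 < δ) (hε : 0 ≤ ε) (hμ₀ : 0 < μ₀)
    (hκ : ε * Real.sqrt P / δ < 1)
    (d : Fin P → ℝ)
    (hd₂ : Real.sqrt (∑ j, d j ^ 2) ≥ δ)
    (hcoh : (P : ℝ) * ‖d‖ ^ 2 / (∑ j, d j ^ 2) ≤ μ₀) :
    ((Finset.univ.filter fun j => ε < |d j|).card : ℝ) ≥
      (P : ℝ) * (1 - (ε * Real.sqrt P / δ) ^ 2) / μ₀ :=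
  distinguishing_coordinates_count_general P δ ε μ₀ hδ hμ₀ d hd₂ hcoh
end

section
/- Let M ≥ 3 be an integer and 0 < β₀ ≤ 1. If log β₀ ≤ 1/(M−1) + (2/(M−2))·log(1/(M−1)), then η₀ = Σ_{i=1}^{M−1} (M choose i)² β₀^(i(M−i)) ≤ M³ β₀^(M−1). -/
/-!
The terms `t i = (M choose i)² β^(i(M-i))` are symmetric under `i ↦ M - i`, and
`t (j+1) / t j = ((M-j)/(j+1))² β^(M-1-2j)`. Once these ratios are at most `1` for `2j + 2 ≤ M`,
each of the `M - 1` terms is at most `t 1 = M² β^(M-1)`.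

With `k = M - 1 - 2j` the ratio condition reads `2 logRatio (M+1) k ≤ -k log β`. The sequence
`k ↦ logRatio A k = log (A+k) - log (A-k)` is discretely convex and vanishes at `0`, so
`logRatio A k / k` is nondecreasing and the worst case is `k = M - 3`; for `M ≥ 8` this is an
elementary inequality in `log (M-1)`, proved from the tangent line of `log` at `e²`. For
`4 ≤ M ≤ 7` the hypothesis forces `β ≤ 0.59` and the sum, a polynomial in `β`, is checked directly
(for `M = 3` there is no ratio condition).
-/

open Real Finset

theorem mul_apply_le_of_sub_le_sub {f : ℕ → ℝ} {k K : ℕ} (h0 : f 0 = 0)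
    (hconv : ∀ j, j + 2 ≤ K → f (j + 1) - f j ≤ f (j + 2) - f (j + 1)) (hk : k ≤ K) :
    (K : ℝ) * f k ≤ k * f K := by
  have div_mono : ∀ n, n < K → ((n : ℝ) + 1) * f n ≤ n * f (n + 1) := by
    intro n
    induction n with
    | zero => simp [h0]
    | succ n ih =>
      intro hn
      have := mul_le_mul_of_nonneg_left (hconv n (by omega)) (by positivity : (0 : ℝ) ≤ n + 1)
      push_cast
      linarith [ih (by omega)]
  suffices ∀ n, k ≤ n → n ≤ K → (n : ℝ) * f k ≤ k * f n from this K hk le_rfl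
  intro n hn
  induction n, hn using Nat.le_induction with
  | base => exact fun _ ↦ le_rfl
  | succ n hkn ih =>
    intro hnK
    rcases Nat.eq_zero_or_pos n with rfl | hn
    · obtain rfl : k = 0 := by omega
      simp [h0]
    have h1 := mul_le_mul_of_nonneg_left (ih (by omega)) (by positivity : (0 : ℝ) ≤ n + 1)
    have h2 := mul_le_mul_of_nonneg_left (div_mono n (by omega)) (Nat.cast_nonneg k : (0 : ℝ) ≤ k)
    have : (n : ℝ) * ((n + 1) * f k) ≤ n * (k * f (n + 1)) := by linarith
    exact_mod_cast le_of_mul_le_mul_left this (by positivity)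

theorem log_sub_one_add_log_add_one_sub_two_mul_log_le {p q : ℝ} (hq : 1 < q) (hqp : q ≤ p) :
    log (q - 1) + log (q + 1) - 2 * log q ≤ log (p - 1) + log (p + 1) - 2 * log p := by
  have key : ∀ x : ℝ, 1 < x → log (x - 1) + log (x + 1) - 2 * log x = log (1 - (x ^ 2)⁻¹) := by
    intro x hx
    have : 2 * log x = log (x ^ 2) := by rw [log_pow]; norm_num
    rw [this, ← log_mul (by linarith) (by linarith), ← log_div (by nlinarith) (by positivity)]
    congr 1
    field_simp
    ring
  rw [key q hq, key p (hq.trans_le hqp)]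
  have : 0 < 1 - (q ^ 2)⁻¹ := by
    rw [sub_pos]
    exact inv_lt_one_of_one_lt₀ (one_lt_pow₀ hq two_ne_zero)
  gcongr

noncomputable def logRatio (A : ℝ) (n : ℕ) : ℝ := log (A + n) - log (A - n)

theorem logRatio_zero (A : ℝ) : logRatio A 0 = 0 := by simp [logRatio]

theorem logRatio_succ_sub_le {A : ℝ} {n : ℕ} (hn : (n : ℝ) + 2 < A) :
    logRatio A (n + 1) - logRatio A n ≤ logRatio A (n + 2) - logRatio A (n + 1) := by
  have := log_sub_one_add_log_add_one_sub_two_mul_log_le (p := A + n + 1) (q := A - n - 1)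
    (by linarith) (by linarith [n.cast_nonneg (α := ℝ)])
  simp only [logRatio]
  push_cast
  ring_nf at this ⊢
  linarith

theorem two_mul_log_div_two_le {x : ℝ} (hx : 7 ≤ x) :
    2 * log (x / 2) ≤ (x - 2) * (2 * log x / (x - 1) - 1 / x) := by
  have hx1 : 0 < x - 1 := by linarith
  have he : 7 < exp 2 := by
    have := exp_one_gt_d9
    rw [show (2 : ℝ) = 1 + 1 by norm_num, exp_add]
    nlinarith
  have hlog : log x ≤ x / 7 + 1 := by
    have := log_le_sub_one_of_pos (x := x / exp 2) (by positivity)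
    rw [log_div (by positivity) (exp_pos 2).ne', log_exp] at this
    have : x / exp 2 ≤ x / 7 := div_le_div_of_nonneg_left (by linarith) (by norm_num) he.le
    linarith
  have key : 2 * log x * x + (x - 2) * (x - 1) ≤ 2 * log 2 * (x * (x - 1)) := by
    have h1 := mul_le_mul_of_nonneg_right hlog (by linarith : (0 : ℝ) ≤ x)
    have h2 := mul_le_mul_of_nonneg_right log_two_gt_d9.le (by positivity : 0 ≤ x * (x - 1))
    have h3 := mul_nonneg (by linarith : (0 : ℝ) ≤ x - 7) (by linarith : (0 : ℝ) ≤ x)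
    norm_num at h1 h2
    linarith
  have : (x - 2) * (2 * log x / (x - 1) - 1 / x) =
      2 * log x - (2 * log x * x + (x - 2) * (x - 1)) / (x * (x - 1)) := by
    field_simp
    ring
  rw [log_div (by linarith) two_ne_zero, this, le_sub_iff_add_le, ← le_sub_iff_add_le',
    div_le_iff₀ (by positivity)]
  linarith

theorem two_mul_logRatio_le {M k : ℕ} (hM : 8 ≤ M) (hk : k ≤ M - 3) :
    2 * logRatio (M + 1) k ≤ k * (2 * log ((M : ℝ) - 1) / (M - 2) - 1 / (M - 1)) := by
  have hM' : (8 : ℝ) ≤ M := by exact_mod_cast hM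
  have hM3 : (0 : ℝ) < M - 3 := by linarith
  have hsec : ((M - 3 : ℕ) : ℝ) * logRatio (M + 1) k ≤ k * logRatio (M + 1) (M - 3) :=
    mul_apply_le_of_sub_le_sub (logRatio_zero _)
      (fun i hi ↦ logRatio_succ_sub_le (by exact_mod_cast (by omega : i + 2 < M + 1))) hk
  have hK : logRatio (M + 1) (M - 3) = log (((M : ℝ) - 1) / 2) := by
    rw [logRatio, Nat.cast_sub (by omega), show (M : ℝ) + 1 + (M - (3 : ℕ)) = 2 * (M - 1) by
      push_cast; ring, show (M : ℝ) + 1 - (M - (3 : ℕ)) = 4 by push_cast; ring,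
      ← log_div (by linarith) (by norm_num)]
    congr 1
    ring
  have hstar := two_mul_log_div_two_le (x := (M : ℝ) - 1) (by linarith)
  rw [show (M : ℝ) - 1 - 2 = M - 3 by ring, show (M : ℝ) - 1 - 1 = M - 2 by ring] at hstar
  rw [Nat.cast_sub (by omega), hK] at hsec
  push_cast at hsec
  refine le_of_mul_le_mul_left ?_ hM3
  calc (M - 3) * (2 * logRatio (M + 1) k) ≤ k * (2 * log (((M : ℝ) - 1) / 2)) := by linarith
    _ ≤ k * ((M - 3) * (2 * log ((M : ℝ) - 1) / (M - 2) - 1 / (M - 1))) :=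
      mul_le_mul_of_nonneg_left hstar k.cast_nonneg
    _ = _ := by ring

theorem sub_sq_mul_pow_le_of_log_le {M : ℕ} (hM : 8 ≤ M) {β : ℝ} (hβ : 0 < β)
    (hlog : log β ≤ 1 / ((M : ℝ) - 1) + (2 / ((M : ℝ) - 2)) * log (1 / ((M : ℝ) - 1)))
    {j : ℕ} (hj : 1 ≤ j) (hjM : 2 * j + 2 ≤ M) :
    ((M : ℝ) - j) ^ 2 * β ^ (M - 1 - 2 * j) ≤ ((j : ℝ) + 1) ^ 2 := by
  have hjM' : 2 * (j : ℝ) + 2 ≤ M := by exact_mod_cast hjM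
  have hMj : (0 : ℝ) < M - j := by linarith
  set k := M - 1 - 2 * j
  have hk : (k : ℝ) = M - 1 - 2 * j := by
    rw [← (by omega : k + 1 + 2 * j = M)]
    push_cast
    ring
  have hkj : logRatio (M + 1) k = log ((M : ℝ) - j) - log ((j : ℝ) + 1) := by
    rw [logRatio, hk, show (M : ℝ) + 1 + (M - 1 - 2 * j) = 2 * (M - j) by ring,
      show (M : ℝ) + 1 - (M - 1 - 2 * j) = 2 * (j + 1) by ring,
      log_mul two_ne_zero hMj.ne', log_mul two_ne_zero (by positivity)]
    ring
  have hβR : 2 * log ((M : ℝ) - 1) / (M - 2) - 1 / (M - 1) ≤ -log β := by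
    rw [one_div ((M : ℝ) - 1), log_inv] at hlog
    linarith [one_div ((M : ℝ) - 1),
      show 2 / ((M : ℝ) - 2) * -log (M - 1) = -(2 * log (M - 1) / (M - 2)) by ring]
  have key := (two_mul_logRatio_le hM (by omega : k ≤ M - 3)).trans
    (mul_le_mul_of_nonneg_left hβR k.cast_nonneg)
  rw [hkj] at key
  rw [← log_le_log_iff (by positivity) (by positivity), log_mul (by positivity) (by positivity),
    log_pow, log_pow, log_pow]
  push_cast
  linarith

theorem choose_succ_sq_mul_pow_le {M j : ℕ} {β : ℝ} (hβ : 0 ≤ β) (hj : 2 * j + 1 ≤ M)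
    (hratio : ((M : ℝ) - j) ^ 2 * β ^ (M - 1 - 2 * j) ≤ ((j : ℝ) + 1) ^ 2) :
    (M.choose (j + 1) : ℝ) ^ 2 * β ^ ((j + 1) * (M - (j + 1))) ≤
      (M.choose j : ℝ) ^ 2 * β ^ (j * (M - j)) := by
  obtain ⟨r, rfl⟩ := Nat.exists_eq_add_of_le hj
  have hexp : (j + 1) * (2 * j + 1 + r - (j + 1)) = j * (2 * j + 1 + r - j) + r := by
    rw [show 2 * j + 1 + r - (j + 1) = j + r by omega, show 2 * j + 1 + r - j = j + 1 + r by omega]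
    ring
  have hchoose : ((2 * j + 1 + r).choose (j + 1) : ℝ) * (j + 1) =
      (2 * j + 1 + r).choose j * ((2 * j + 1 + r : ℕ) - j) := by
    rw [← Nat.cast_sub (by omega)]
    exact_mod_cast Nat.choose_succ_right_eq (2 * j + 1 + r) j
  rw [show 2 * j + 1 + r - 1 - 2 * j = r by omega] at hratio
  refine le_of_mul_le_mul_right ?_ (by positivity : (0 : ℝ) < ((j : ℝ) + 1) ^ 2)
  calc _ = (((2 * j + 1 + r).choose (j + 1) : ℝ) * (j + 1)) ^ 2 * β ^ r *
        β ^ (j * (2 * j + 1 + r - j)) := by rw [hexp, pow_add]; ring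
    _ = ((2 * j + 1 + r).choose j : ℝ) ^ 2 * β ^ (j * (2 * j + 1 + r - j)) *
        ((((2 * j + 1 + r : ℕ) : ℝ) - j) ^ 2 * β ^ r) := by rw [hchoose]; ring
    _ ≤ _ := by gcongr

theorem choose_sq_mul_pow_le_of_ratio {M : ℕ} {β : ℝ} (hβ : 0 ≤ β)
    (hratio : ∀ j, 1 ≤ j → 2 * j + 2 ≤ M →
      ((M : ℝ) - j) ^ 2 * β ^ (M - 1 - 2 * j) ≤ ((j : ℝ) + 1) ^ 2)
    {i : ℕ} (hi : 1 ≤ i) (hiM : i ≤ M - 1) :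
    (M.choose i : ℝ) ^ 2 * β ^ (i * (M - i)) ≤ (M : ℝ) ^ 2 * β ^ (M - 1) := by
  wlog hhalf : 2 * i ≤ M generalizing i
  · have := this (i := M - i) (by omega) (by omega) (by omega)
    rwa [Nat.choose_symm (by omega), Nat.sub_sub_self (by omega), mul_comm (M - i)] at this
  induction i, hi using Nat.le_induction with
  | base => simp
  | succ j hj ih =>
    exact (choose_succ_sq_mul_pow_le hβ (by omega) (hratio j hj (by omega))).trans
      (ih (by omega) (by omega))

theorem sum_choose_sq_mul_pow_le_of_ratio {M : ℕ} {β : ℝ} (hβ : 0 ≤ β)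
    (hratio : ∀ j, 1 ≤ j → 2 * j + 2 ≤ M →
      ((M : ℝ) - j) ^ 2 * β ^ (M - 1 - 2 * j) ≤ ((j : ℝ) + 1) ^ 2) :
    ∑ i ∈ Icc 1 (M - 1), (M.choose i : ℝ) ^ 2 * β ^ (i * (M - i)) ≤ (M : ℝ) ^ 3 * β ^ (M - 1) := by
  calc _ ≤ #(Icc 1 (M - 1)) • ((M : ℝ) ^ 2 * β ^ (M - 1)) :=
        sum_le_card_nsmul _ _ _ fun i hi ↦ by
          rw [mem_Icc] at hi
          exact choose_sq_mul_pow_le_of_ratio hβ hratio hi.1 hi.2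
    _ ≤ (M : ℝ) * ((M : ℝ) ^ 2 * β ^ (M - 1)) := by
        rw [Nat.card_Icc, nsmul_eq_mul]
        gcongr
        exact_mod_cast (by omega : M - 1 + 1 - 1 ≤ M)
    _ = _ := by ring

theorem pow_mul_pow_le_exp_of_log_le {M : ℕ} (hM : 3 ≤ M) {β : ℝ} (hβ : 0 < β)
    (hlog : log β ≤ 1 / ((M : ℝ) - 1) + (2 / ((M : ℝ) - 2)) * log (1 / ((M : ℝ) - 1))) :
    β ^ ((M - 1) * (M - 2)) * ((M : ℝ) - 1) ^ (2 * (M - 1)) ≤ exp 1 ^ (M - 2) := by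
  have hM' : (3 : ℝ) ≤ M := by exact_mod_cast hM
  have hM1 : (0 : ℝ) < M - 1 := by linarith
  have hM2 : (0 : ℝ) < M - 2 := by linarith
  have h := mul_le_mul_of_nonneg_left hlog (by positivity : (0 : ℝ) ≤ (M - 1) * (M - 2))
  rw [show ((M : ℝ) - 1) * (M - 2) * (1 / (M - 1) + 2 / (M - 2) * log (1 / (M - 1))) =
      (M - 2) - 2 * (M - 1) * log (M - 1) by
    rw [one_div (_ - 1), log_inv]; field_simp; ring] at h
  rw [← log_le_log_iff (by positivity) (by positivity), log_mul (by positivity) (by positivity),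
    log_pow, log_pow, log_pow, log_exp]
  push_cast [Nat.cast_sub (by omega : 1 ≤ M), Nat.cast_sub (by omega : 2 ≤ M)]
  linarith

theorem le_of_log_le_of_le_seven {M : ℕ} (hM : 4 ≤ M) (hM7 : M ≤ 7) {β : ℝ} (hβ : 0 < β)
    (hlog : log β ≤ 1 / ((M : ℝ) - 1) + (2 / ((M : ℝ) - 2)) * log (1 / ((M : ℝ) - 1))) :
    β ≤ 59 / 100 := by
  have h := (pow_mul_pow_le_exp_of_log_le (by omega) hβ hlog).trans
    (pow_le_pow_left₀ (exp_pos 1).le (exp_one_lt_d9.le.trans (by norm_num) : exp 1 ≤ 3) _)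
  refine le_of_pow_le_pow_left₀ (n := (M - 1) * (M - 2))
    (Nat.mul_ne_zero (by omega) (by omega)) (by norm_num) ?_
  interval_cases M <;> norm_num at h ⊢ <;> linarith

theorem sum_choose_sq_mul_pow_le_of_le_seven {M : ℕ} (hM : 4 ≤ M) (hM7 : M ≤ 7) {β : ℝ}
    (hβ : 0 ≤ β) (hβ59 : β ≤ 59 / 100) :
    ∑ i ∈ Icc 1 (M - 1), (M.choose i : ℝ) ^ 2 * β ^ (i * (M - i)) ≤ (M : ℝ) ^ 3 * β ^ (M - 1) := by
  have h : ∀ a b, β ^ a * β ^ b ≤ β ^ a * (59 / 100) ^ b := fun a b ↦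
    mul_le_mul_of_nonneg_left (pow_le_pow_left₀ hβ hβ59 b) (pow_nonneg hβ a)
  interval_cases M <;> norm_num [sum_Icc_succ_top, Nat.choose]
  · linarith [h 3 1, pow_nonneg hβ 3]
  · linarith [h 4 2, pow_nonneg hβ 4]
  · linarith [h 5 3, h 5 4, pow_nonneg hβ 5]
  · linarith [h 6 4, h 6 6, pow_nonneg hβ 6]

theorem eta0_approx_bound_general (M : ℕ) (hM : 3 ≤ M) (β₀ : ℝ) (hβ0 : 0 < β₀)
    (hlog : Real.log β₀ ≤
      1 / ((M : ℝ) - 1) + (2 / ((M : ℝ) - 2)) * Real.log (1 / ((M : ℝ) - 1))) :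
    ∑ i ∈ Finset.Icc 1 (M - 1), (M.choose i : ℝ) ^ 2 * β₀ ^ (i * (M - i)) ≤
      (M : ℝ) ^ 3 * β₀ ^ (M - 1) := by
  rcases lt_or_ge M 8 with hM8 | hM8
  · rcases hM.eq_or_lt with rfl | hM4
    · exact sum_choose_sq_mul_pow_le_of_ratio hβ0.le fun j hj hjM ↦ by omega
    · exact sum_choose_sq_mul_pow_le_of_le_seven hM4 (by omega) hβ0.le
        (le_of_log_le_of_le_seven hM4 (by omega) hβ0 hlog)
  · exact sum_choose_sq_mul_pow_le_of_ratio hβ0.le fun j hj hjM ↦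
      sub_sq_mul_pow_le_of_log_le hM8 hβ0 hlog hj hjM

/-- **Simplified bound on the failure probability `η₀` for `K = 2`.**
Let `M ≥ 3` and `0 < β₀ ≤ 1`.  If `log β₀ ≤ 1/(M−1) + (2/(M−2))·log(1/(M−1))`, then
`η₀ = ∑_{i=1}^{M−1} (M choose i)² β₀^(i(M−i)) ≤ M³ β₀^(M−1)`. -/
theorem eta0_approx_bound (M : ℕ) (hM : 3 ≤ M) (β₀ : ℝ) (hβ0 : 0 < β₀) (hβ1 : β₀ ≤ 1)
    (hlog : Real.log β₀ ≤
      1 / ((M : ℝ) - 1) + (2 / ((M : ℝ) - 2)) * Real.log (1 / ((M : ℝ) - 1))) :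
    ∑ i ∈ Finset.Icc 1 (M - 1), (M.choose i : ℝ) ^ 2 * β₀ ^ (i * (M - i)) ≤
      (M : ℝ) ^ 3 * β₀ ^ (M - 1) :=
  eta0_approx_bound_general M hM β₀ hβ0 hlog
end

section
/- (Theorem 2) Let P, K, M be positive integers, δ > 0, ε ≥ 0 with κ = ε√P/δ < 1. Let x₁,…,x_{KM} ∈ ℝ^P be points partitioned into K ground-truth clusters of M points each, such that every pair of points from different clusters has ℓ₂ distance at least δ and every pair of points from the same cluster has ℓ∞ distance at most ε. Consider the fully observed optimization problem: minimize over u₁,…,u_{KM} ∈ ℝ^P the number of ordered pairs (i, j) with u_i ≠ u_j, subject to ‖x_i − u_i‖_∞ ≤ ε/2 for all i. Then this problem is feasible, and every minimizer (u₁*,…,u_{KM}*) satisfies u_i* = u_j* if and only if x_i and x_j belong to the same ground-truth cluster. -/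
/-!
Two fused points `u i = u j` pull their data points within `ε` in the sup norm, hence within
`ε√P < δ` in ℓ₂, so every feasible assignment must separate different clusters. Conversely,
assigning each point the coordinatewise midpoint of the range of its cluster is feasible and
fuses exactly the pairs within a cluster. A minimizer cannot have more separated pairs than
this assignment, while it separates at least the pairs from different clusters, so the two
sets of separated pairs coincide.
-/

lemma sqrt_sum_sq_le_sqrt_card_mul_norm {ι : Type*} [Fintype ι] (y : ι → ℝ) :
    √(∑ l, y l ^ 2) ≤ √(Fintype.card ι) * ‖y‖ := by
  have hcoord : ∀ l, y l ^ 2 ≤ ‖y‖ ^ 2 := fun l => by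
    simpa only [Real.norm_eq_abs, sq_abs] using
      pow_le_pow_left₀ (norm_nonneg _) (norm_le_pi_norm y l) 2
  calc √(∑ l, y l ^ 2) ≤ √(Fintype.card ι * ‖y‖ ^ 2) := by
        gcongr
        exact (Finset.sum_le_sum fun l _ => hcoord l).trans_eq (by simp)
    _ = √(Fintype.card ι) * ‖y‖ := by
        rw [Real.sqrt_mul (Nat.cast_nonneg _), Real.sqrt_sq (norm_nonneg _)]

lemma ne_of_label_ne_of_norm_sub_le_half {α γ ι : Type*} [Fintype ι] {x u : α → ι → ℝ}
    {c : α → γ} {δ ε : ℝ} (hεδ : ε * √(Fintype.card ι) < δ)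
    (hsep : ∀ i j, c i ≠ c j → δ ≤ √(∑ l, (x i l - x j l) ^ 2))
    (hu : ∀ i, ‖x i - u i‖ ≤ ε / 2) {i j : α} (hij : c i ≠ c j) : u i ≠ u j := by
  intro huij
  have hclose : ‖x i - x j‖ ≤ ε :=
    calc ‖x i - x j‖ ≤ ‖x i - u i‖ + ‖u i - x j‖ := norm_sub_le_norm_sub_add_norm_sub _ _ _
      _ ≤ ε / 2 + ε / 2 := by
          refine add_le_add (hu i) ?_
          rw [norm_sub_rev, huij]
          exact hu j
      _ = ε := add_halves ε
  have hℓ₂ : √(∑ l, (x i l - x j l) ^ 2) ≤ √(Fintype.card ι) * ‖x i - x j‖ :=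
    sqrt_sum_sq_le_sqrt_card_mul_norm (x i - x j)
  have hscaled : √(Fintype.card ι) * ‖x i - x j‖ ≤ ε * √(Fintype.card ι) := by
    rw [mul_comm ε]
    gcongr
  linarith [hsep i j hij]

/-- A Chebyshev center of the points `y a`, `a ∈ s`, for the sup norm. -/
noncomputable def supInfCenter {α ι : Type*} (s : Finset α) (hs : s.Nonempty)
    (y : α → ι → ℝ) : ι → ℝ :=
  fun l => (s.sup' hs (y · l) + s.inf' hs (y · l)) / 2

lemma norm_sub_supInfCenter_le {α ι : Type*} [Fintype ι] {s : Finset α} (hs : s.Nonempty)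
    {y : α → ι → ℝ} {ε : ℝ} (hdiam : ∀ a ∈ s, ∀ b ∈ s, ‖y a - y b‖ ≤ ε) {a : α}
    (ha : a ∈ s) : ‖y a - supInfCenter s hs y‖ ≤ ε / 2 := by
  have hε : 0 ≤ ε := by simpa using hdiam a ha a ha
  refine (pi_norm_le_iff_of_nonneg (by linarith)).2 fun l => ?_
  have hspread : s.sup' hs (y · l) ≤ s.inf' hs (y · l) + ε := by
    refine Finset.sup'_le _ _ fun p hp => ?_
    rw [← sub_le_iff_le_add]
    refine Finset.le_inf' hs (y · l) fun q hq => ?_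
    have hcoord : y p l - y q l ≤ ‖y p - y q‖ := by
      simpa only [Pi.sub_apply, Real.norm_eq_abs] using
        (le_abs_self _).trans (norm_le_pi_norm (y p - y q) l)
    linarith [hdiam p hp q hq]
  have hup := Finset.le_sup' (y · l) ha
  have hlow := Finset.inf'_le (y · l) ha
  rw [Pi.sub_apply, Real.norm_eq_abs, abs_le, supInfCenter]
  constructor <;> linarith

lemma eq_iff_label_eq_of_ncard_le {α β γ : Type*} [Finite α] {c : α → γ} {u v : α → β}
    (hu : ∀ i j, c i ≠ c j → u i ≠ u j) (hv : ∀ i j, c i = c j → v i = v j)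
    (hle : {q : α × α | u q.1 ≠ u q.2}.ncard ≤ {q : α × α | v q.1 ≠ v q.2}.ncard)
    (i j : α) : u i = u j ↔ c i = c j := by
  have hcu : {q : α × α | c q.1 ≠ c q.2} ⊆ {q | u q.1 ≠ u q.2} := fun q => hu q.1 q.2
  have hvc : {q : α × α | v q.1 ≠ v q.2} ⊆ {q | c q.1 ≠ c q.2} := fun q => mt (hv q.1 q.2)
  have hsets := Set.eq_of_subset_of_ncard_le hcu (hle.trans (Set.ncard_le_ncard hvc))
  exact not_iff_not.mp (Set.ext_iff.mp hsets (i, j)).symm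

theorem l0_clustering_recovery_no_missing_general (P K M : ℕ)
    (δ ε : ℝ) (hδ : 0 < δ)
    (hκ : ε * Real.sqrt P / δ < 1)
    (x : Fin (K * M) → Fin P → ℝ) (c : Fin (K * M) → Fin K)
    (hsep : ∀ i j : Fin (K * M), c i ≠ c j →
      Real.sqrt (∑ l, (x i l - x j l) ^ 2) ≥ δ)
    (hsame : ∀ i j : Fin (K * M), c i = c j → ‖x i - x j‖ ≤ ε) :
    (∃ u : Fin (K * M) → Fin P → ℝ, ∀ i, ‖x i - u i‖ ≤ ε / 2) ∧
    (∀ u : Fin (K * M) → Fin P → ℝ,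
      (∀ i, ‖x i - u i‖ ≤ ε / 2) →
      (∀ v : Fin (K * M) → Fin P → ℝ, (∀ i, ‖x i - v i‖ ≤ ε / 2) →
        Set.ncard {q : Fin (K * M) × Fin (K * M) | u q.1 ≠ u q.2} ≤
          Set.ncard {q : Fin (K * M) × Fin (K * M) | v q.1 ≠ v q.2}) →
      ∀ i j : Fin (K * M), u i = u j ↔ c i = c j) := by
  have hεδ : ε * √(Fintype.card (Fin P)) < δ := by
    simpa using (div_lt_one hδ).mp hκ
  let v : Fin (K * M) → Fin P → ℝ := fun i =>
    supInfCenter (Finset.univ.filter (c · = c i)) ⟨i, by simp⟩ x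
  have hv : ∀ i, ‖x i - v i‖ ≤ ε / 2 := fun i =>
    norm_sub_supInfCenter_le _ (fun a ha b hb => hsame a b (by simp_all)) (by simp)
  have hvfuse : ∀ i j, c i = c j → v i = v j := by
    intro i j hij
    simp only [v]
    congr 1
    ext
    simp [hij]
  refine ⟨⟨v, hv⟩, fun u hu hmin => eq_iff_label_eq_of_ncard_le ?_ hvfuse (hmin v hv)⟩
  exact fun i j => ne_of_label_ne_of_norm_sub_le_half hεδ hsep hu

/-- **Theorem 2: exact cluster recovery by the ℓ₀ fusion problem without missing entries.**
Let `κ = ε√P/δ < 1` and let `x₁,…,x_{KM} ∈ ℝ^P` be partitioned into `K` ground-truth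
clusters of `M` points each (labels `c : Fin (KM) → Fin K`), with pairs from different
clusters at ℓ₂ distance `≥ δ` and pairs from the same cluster at ℓ∞ distance `≤ ε`.
Consider minimizing, over `u₁,…,u_{KM} ∈ ℝ^P`, the number of ordered pairs `(i, j)` with
`u_i ≠ u_j`, subject to `‖x_i − u_i‖_∞ ≤ ε/2` for all `i`.  Then the problem is feasible
and every minimizer satisfies `u_i = u_j` iff `x_i, x_j` belong to the same cluster.
(The norm on `Fin P → ℝ` is the sup norm.) -/
theorem l0_clustering_recovery_no_missing (P K M : ℕ) (hP : 0 < P) (hK : 0 < K)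
    (hM : 0 < M) (δ ε : ℝ) (hδ : 0 < δ) (hε : 0 ≤ ε)
    (hκ : ε * Real.sqrt P / δ < 1)
    (x : Fin (K * M) → Fin P → ℝ) (c : Fin (K * M) → Fin K)
    (hc : ∀ k : Fin K, (Finset.univ.filter fun i => c i = k).card = M)
    (hsep : ∀ i j : Fin (K * M), c i ≠ c j →
      Real.sqrt (∑ l, (x i l - x j l) ^ 2) ≥ δ)
    (hsame : ∀ i j : Fin (K * M), c i = c j → ‖x i - x j‖ ≤ ε) :
    (∃ u : Fin (K * M) → Fin P → ℝ, ∀ i, ‖x i - u i‖ ≤ ε / 2) ∧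
    (∀ u : Fin (K * M) → Fin P → ℝ,
      (∀ i, ‖x i - u i‖ ≤ ε / 2) →
      (∀ v : Fin (K * M) → Fin P → ℝ, (∀ i, ‖x i - v i‖ ≤ ε / 2) →
        Set.ncard {q : Fin (K * M) × Fin (K * M) | u q.1 ≠ u q.2} ≤
          Set.ncard {q : Fin (K * M) × Fin (K * M) | v q.1 ≠ v q.2}) →
      ∀ i j : Fin (K * M), u i = u j ↔ c i = c j) :=
  l0_clustering_recovery_no_missing_general P K M δ ε hδ hκ x c hsep hsame
end
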